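/- For the discretized Gaussian noise and any k with μ + m₀ ≤ k ≤ M (decreasing region), the ratio p_θ(k − m₀)/p_θ(k) ≤ exp((1/(2σ²))(m₀ + Δ)(2k + Δ − m₀ − 2μ)) ≤ exp((1/(2σ²))(m₀ + Δ)(2M + Δ − m₀ − 2μ)). -/
import Mathlib


/-- Discretized Gaussian PMF on the lattice `Δℤ` (index `k : ℤ` stands for the point `k·Δ`):
`p_θ(k) = ∫_{kΔ}^{kΔ+Δ} (1/√(2πσ²)) e^{-(t-μ)²/(2σ²)} dt`. -/
noncomputable def gaussPMF (Δ σ μ : ℝ) (k : ℤ) : ℝ :=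
  ∫ t in (Δ * k)..(Δ * k + Δ),
    (1 / Real.sqrt (2 * Real.pi * σ ^ 2)) * Real.exp (-(t - μ) ^ 2 / (2 * σ ^ 2))

lemma gauss_int_upper (c s Δ μ a : ℝ) (hc : 0 ≤ c) (hs : 0 < s) (hΔ : 0 ≤ Δ)
    (ha : μ ≤ a) :
    (∫ t in a..(a + Δ), c * Real.exp (-(t - μ) ^ 2 / s))
      ≤ Δ * (c * Real.exp (-(a - μ) ^ 2 / s)) := by
  have hcont : Continuous fun t : ℝ => c * Real.exp (-(t - μ) ^ 2 / s) := by
    continuity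
  have h := intervalIntegral.integral_mono_on (μ := MeasureTheory.volume) (by linarith : a ≤ a + Δ)
    (hcont.intervalIntegrable _ _)
    (intervalIntegrable_const (c := c * Real.exp (-(a - μ) ^ 2 / s)))
    (fun t ht => by
      have h1 : a ≤ t := ht.1
      have h2 : (a - μ) ^ 2 ≤ (t - μ) ^ 2 := by nlinarith
      have : -(t - μ) ^ 2 / s ≤ -(a - μ) ^ 2 / s := by
        apply div_le_div_of_nonneg_right (by linarith) hs.le
      exact mul_le_mul_of_nonneg_left (Real.exp_le_exp.2 this) hc)
  simpa [mul_comm, mul_left_comm] using h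

lemma gauss_int_lower (c s Δ μ a : ℝ) (hc : 0 ≤ c) (hs : 0 < s) (hΔ : 0 ≤ Δ)
    (ha : μ ≤ a) :
    Δ * (c * Real.exp (-(a + Δ - μ) ^ 2 / s))
      ≤ ∫ t in a..(a + Δ), c * Real.exp (-(t - μ) ^ 2 / s) := by
  have hcont : Continuous fun t : ℝ => c * Real.exp (-(t - μ) ^ 2 / s) := by
    continuity
  have h := intervalIntegral.integral_mono_on (μ := MeasureTheory.volume) (by linarith : a ≤ a + Δ)
    (intervalIntegrable_const (c := c * Real.exp (-(a + Δ - μ) ^ 2 / s)))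
    (hcont.intervalIntegrable _ _)
    (fun t ht => by
      have h1 : a ≤ t := ht.1
      have h1' : t ≤ a + Δ := ht.2
      have h2 : (t - μ) ^ 2 ≤ (a + Δ - μ) ^ 2 := by nlinarith
      have : -(a + Δ - μ) ^ 2 / s ≤ -(t - μ) ^ 2 / s := by
        apply div_le_div_of_nonneg_right (by linarith) hs.le
      exact mul_le_mul_of_nonneg_left (Real.exp_le_exp.2 this) hc)
  simpa [mul_comm, mul_left_comm] using h

/-- For the discretized Gaussian noise, on the decreasing region `μ + m₀ ≤ kΔ ≤ T`
(with shift `m₀ = j·Δ`, `0 ≤ m₀ ≤ m = Madj·Δ`, truncation `T ≥ m`), the adjacent probability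
ratio satisfies
`p_θ(k - m₀)/p_θ(k) ≤ exp((1/(2σ²))(m₀+Δ)(2kΔ+Δ-m₀-2μ)) ≤ exp((1/(2σ²))(m₀+Δ)(2T+Δ-m₀-2μ))`. -/
theorem gaussian_ratio_bound_decreasing_region
    (Δ σ μ T : ℝ) (hΔ : 0 < Δ) (hσ : 0 < σ)
    (Madj : ℤ) (hM : 0 < Madj) (hT : (Madj : ℝ) * Δ ≤ T)
    (j k : ℤ) (hj0 : 0 ≤ j) (hjM : j ≤ Madj)
    (hk1 : μ + Δ * j ≤ Δ * k) (hk2 : Δ * k ≤ T) :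
    gaussPMF Δ σ μ (k - j) / gaussPMF Δ σ μ k
        ≤ Real.exp ((1 / (2 * σ ^ 2)) * (Δ * j + Δ) * (2 * (Δ * k) + Δ - Δ * j - 2 * μ)) ∧
      Real.exp ((1 / (2 * σ ^ 2)) * (Δ * j + Δ) * (2 * (Δ * k) + Δ - Δ * j - 2 * μ))
        ≤ Real.exp ((1 / (2 * σ ^ 2)) * (Δ * j + Δ) * (2 * T + Δ - Δ * j - 2 * μ)) := by
  set s : ℝ := 2 * σ ^ 2 with hs_def
  have hs : 0 < s := by positivity
  set c : ℝ := 1 / Real.sqrt (2 * Real.pi * σ ^ 2) with hc_def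
  have hc : 0 < c := by
    have : 0 < Real.sqrt (2 * Real.pi * σ ^ 2) := by
      apply Real.sqrt_pos.2; positivity
    positivity
  have hj : (0 : ℝ) ≤ Δ * j := by
    have : (0:ℝ) ≤ (j:ℝ) := by exact_mod_cast hj0
    positivity
  -- numerator bound
  have hkj : μ ≤ Δ * ((k : ℝ) - j) := by nlinarith [hk1]
  have hup : gaussPMF Δ σ μ (k - j) ≤ Δ * (c * Real.exp (-(Δ * ((k:ℝ) - j) - μ) ^ 2 / s)) := by
    have := gauss_int_upper c s Δ μ (Δ * ((k:ℝ) - j)) hc.le hs hΔ.le hkj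
    unfold gaussPMF
    push_cast
    convert this using 2
  have hkμ : μ ≤ Δ * (k : ℝ) := by nlinarith [hk1]
  have hlo : Δ * (c * Real.exp (-(Δ * (k:ℝ) + Δ - μ) ^ 2 / s)) ≤ gaussPMF Δ σ μ k :=
    gauss_int_lower c s Δ μ (Δ * (k:ℝ)) hc.le hs hΔ.le hkμ
  have hden : 0 < gaussPMF Δ σ μ k :=
    lt_of_lt_of_le (by positivity) hlo
  set E : ℝ := (1 / s) * (Δ * j + Δ) * (2 * (Δ * k) + Δ - Δ * j - 2 * μ) with hE_def
  constructor
  · rw [div_le_iff₀ hden]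
    have key : Real.exp (-(Δ * ((k:ℝ) - j) - μ) ^ 2 / s)
        = Real.exp E * Real.exp (-(Δ * (k:ℝ) + Δ - μ) ^ 2 / s) := by
      rw [← Real.exp_add]
      congr 1
      rw [hE_def]
      ring
    calc gaussPMF Δ σ μ (k - j) ≤ Δ * (c * Real.exp (-(Δ * ((k:ℝ) - j) - μ) ^ 2 / s)) := hup
      _ = Real.exp E * (Δ * (c * Real.exp (-(Δ * (k:ℝ) + Δ - μ) ^ 2 / s))) := by
          rw [key]; ring
      _ ≤ Real.exp E * gaussPMF Δ σ μ k := by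
          exact mul_le_mul_of_nonneg_left hlo (Real.exp_nonneg _)
  · apply Real.exp_le_exp.2
    have h1 : 0 ≤ Δ * j + Δ := by linarith
    have h2 : (0:ℝ) < 1 / s := by positivity
    nlinarith [mul_le_mul_of_nonneg_left (by linarith : 2 * (Δ * (k:ℝ)) + Δ - Δ * j - 2 * μ ≤ 2 * T + Δ - Δ * j - 2 * μ) h1]
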